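/- Let Π be the root system of a split real simple Lie algebra and let α, β be roots. If for every root γ the Killing numbers 2⟨γ,α⟩/⟨γ,γ⟩ and 2⟨γ,β⟩/⟨γ,γ⟩ are congruent modulo 2, and α ≠ ±β, then ⟨α,β⟩ = 0. Equivalently: if ⟨α,β⟩ ≠ 0 and α ≠ ±β, then there exists a root γ (namely γ = α or γ = β) such that 2⟨γ,α⟩/⟨γ,γ⟩ and 2⟨γ,β⟩/⟨γ,γ⟩ differ by an odd integer. -/

import Mathlib

open scoped RealInnerProductSpace

/-!
Write `k₁ = 2⟪α,β⟫/⟪α,α⟫` and `k₂ = 2⟪β,α⟫/⟪β,β⟫`. Their product is `4⟪α,β⟫²/(‖α‖²‖β‖²)`,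
which lies in `(0, 4]` by Cauchy–Schwarz since `⟪α,β⟫ ≠ 0`. If both were even, the product
would be `4`, forcing `k₁ = k₂ = ±2`, i.e. `α = ±β`. So `k₁` or `k₂` is odd, and since
`2⟪γ,γ⟫/⟪γ,γ⟫ = 2`, the root `γ = α` (resp. `γ = β`) separates `α` and `β` modulo 2.
-/

theorem Int.odd_or_odd_of_mul_pos_of_mul_le_four {a b : ℤ} (hpos : 0 < a * b)
    (hle : a * b ≤ 4) (htwo : ¬(a = 2 ∧ b = 2)) (hnegtwo : ¬(a = -2 ∧ b = -2)) :
    Odd a ∨ Odd b := by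
  by_contra! heven
  obtain ⟨⟨a', rfl⟩, ⟨b', rfl⟩⟩ :=
    And.intro (Int.not_odd_iff_even.1 heven.1) (Int.not_odd_iff_even.1 heven.2)
  have hone : a' * b' = 1 := by nlinarith
  rcases Int.eq_one_or_neg_one_of_mul_eq_one' hone with ⟨rfl, rfl⟩ | ⟨rfl, rfl⟩
  · exact htwo ⟨rfl, rfl⟩
  · exact hnegtwo ⟨rfl, rfl⟩

section KillingNumber

variable {V : Type*} [NormedAddCommGroup V] [InnerProductSpace ℝ V]

noncomputable def killingNumber (γ α : V) : ℝ := 2 * ⟪γ, α⟫ / ⟪γ, γ⟫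

theorem killingNumber_self {γ : V} (hγ : γ ≠ 0) : killingNumber γ γ = 2 := by
  rw [killingNumber, mul_div_assoc, div_self (inner_self_ne_zero.2 hγ), mul_one]

theorem killingNumber_neg_left (γ α : V) : killingNumber (-γ) α = -killingNumber γ α := by
  simp [killingNumber, neg_div]

theorem killingNumber_neg_right (γ α : V) : killingNumber γ (-α) = -killingNumber γ α := by
  simp [killingNumber, neg_div]

theorem killingNumber_mul_killingNumber (x y : V) :
    killingNumber x y * killingNumber y x = 4 * ⟪x, y⟫ ^ 2 / (⟪x, x⟫ * ⟪y, y⟫) := by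
  rw [killingNumber, killingNumber, real_inner_comm y x]
  ring

theorem killingNumber_mul_killingNumber_pos {x y : V} (h : ⟪x, y⟫ ≠ 0) :
    0 < killingNumber x y * killingNumber y x := by
  have hx : 0 < ⟪x, x⟫ := real_inner_self_pos.2 fun hx ↦ h (by simp [hx])
  have hy : 0 < ⟪y, y⟫ := real_inner_self_pos.2 fun hy ↦ h (by simp [hy])
  rw [killingNumber_mul_killingNumber]
  positivity

theorem killingNumber_mul_killingNumber_le_four (x y : V) :
    killingNumber x y * killingNumber y x ≤ 4 := by
  rw [killingNumber_mul_killingNumber, mul_div_assoc]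
  have := real_inner_mul_inner_self_le x y
  have : ⟪x, y⟫ ^ 2 / (⟪x, x⟫ * ⟪y, y⟫) ≤ 1 :=
    div_le_one_of_le₀ (by nlinarith) (mul_nonneg real_inner_self_nonneg real_inner_self_nonneg)
  linarith

theorem eq_of_killingNumber_eq_two {x y : V} (hxy : killingNumber x y = 2)
    (hyx : killingNumber y x = 2) : x = y := by
  have hx : ⟪x, x⟫ ≠ 0 := fun h ↦ by rw [killingNumber, h, div_zero] at hxy; norm_num at hxy
  have hy : ⟪y, y⟫ ≠ 0 := fun h ↦ by rw [killingNumber, h, div_zero] at hyx; norm_num at hyx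
  rw [killingNumber, div_eq_iff hx] at hxy
  rw [killingNumber, div_eq_iff hy, real_inner_comm] at hyx
  rw [← sub_eq_zero, ← inner_self_eq_zero (𝕜 := ℝ), inner_sub_sub_self, real_inner_comm x y]
  linarith

theorem eq_neg_of_killingNumber_eq_neg_two {x y : V} (hxy : killingNumber x y = -2)
    (hyx : killingNumber y x = -2) : x = -y :=
  eq_of_killingNumber_eq_two (by rw [killingNumber_neg_right, hxy, neg_neg])
    (by rw [killingNumber_neg_left, hyx, neg_neg])

end KillingNumber

theorem stmt0 {V : Type*} [NormedAddCommGroup V] [InnerProductSpace ℝ V]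
    (Rt : Set V)
    (hcrys : ∀ γ ∈ Rt, ∀ α ∈ Rt, ∃ k : ℤ, 2 * ⟪γ, α⟫ / ⟪γ, γ⟫ = (k : ℝ))
    (α β : V) (hα : α ∈ Rt) (hβ : β ∈ Rt)
    (hab : ⟪α, β⟫ ≠ 0) (h1 : α ≠ β) (h2 : α ≠ -β) :
    ∃ γ ∈ Rt, (γ = α ∨ γ = β) ∧
      ∃ k : ℤ, 2 * ⟪γ, α⟫ / ⟪γ, γ⟫ - 2 * ⟪γ, β⟫ / ⟪γ, γ⟫ = 2 * k + 1 := by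
  obtain ⟨k₁, hk₁ : killingNumber α β = k₁⟩ := hcrys α hα β hβ
  obtain ⟨k₂, hk₂ : killingNumber β α = k₂⟩ := hcrys β hβ α hα
  have hodd : Odd k₁ ∨ Odd k₂ := by
    refine Int.odd_or_odd_of_mul_pos_of_mul_le_four ?_ ?_ ?_ ?_
    · exact_mod_cast hk₁ ▸ hk₂ ▸ killingNumber_mul_killingNumber_pos hab
    · exact_mod_cast hk₁ ▸ hk₂ ▸ killingNumber_mul_killingNumber_le_four α β
    · rintro ⟨rfl, rfl⟩
      exact h1 (eq_of_killingNumber_eq_two (by simpa using hk₁) (by simpa using hk₂))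
    · rintro ⟨rfl, rfl⟩
      exact h2 (eq_neg_of_killingNumber_eq_neg_two (by simpa using hk₁) (by simpa using hk₂))
  rcases hodd with ⟨m, rfl⟩ | ⟨m, rfl⟩
  · refine ⟨α, hα, .inl rfl, -m, ?_⟩
    change killingNumber α α - killingNumber α β = _
    rw [killingNumber_self (by rintro rfl; simp at hab), hk₁]
    push_cast; ring
  · refine ⟨β, hβ, .inr rfl, m - 1, ?_⟩
    change killingNumber β α - killingNumber β β = _
    rw [killingNumber_self (by rintro rfl; simp at hab), hk₂]
    push_cast; ring
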